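/- arXiv:2009.08320 — 2 statements merged into one kernel-verified Lean document; each statement's English description precedes it below -/
import Mathlib

section
/- Let z be a nonzero vector in ℝⁿ, g a standard Gaussian random vector in ℝⁿ, and λ > 0. Define φ_λ(s) = (|s| − λ)·1_{|s| ≥ λ}. Then E[φ_λ(⟨g,z⟩)] ≤ √(2/π)·‖z‖₂·exp(−λ²/(2‖z‖₂²)). -/
open MeasureTheory ProbabilityTheory

/-- `φ_λ(s) = (|s| - λ) 1_{|s| ≥ λ}`. -/
noncomputable def phi (l s : ℝ) : ℝ := if l ≤ |s| then |s| - l else 0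

/-- The standard Gaussian measure on `ℝⁿ` (i.i.d. standard normal entries). -/
noncomputable def stdGaussian (n : ℕ) : Measure (Fin n → ℝ) :=
  Measure.pi fun _ => gaussianReal 0 1

/-! A linear form `∑ gᵢ zᵢ` of independent standard Gaussians is `N(0, ‖z‖²)`, as one sees on
characteristic functions. For `X ∼ N(0, v)` with density `f`, `φ_λ(X)` is at most
`X 1{X > λ} + (-X) 1{-X > λ}`; the two terms have the same mean by symmetry, and since
`x f(x) = -v f'(x)`, `E φ_λ(X) ≤ 2 ∫_λ^∞ x f(x) dx = 2 v f(λ) = √(2/π) √v exp(-λ²/(2v))`. -/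

open Real Filter Set
open scoped NNReal Topology

lemma map_pi_gaussianReal_sum {ι : Type*} [Fintype ι] (μ : ι → ℝ) (v : ι → ℝ≥0) :
    (Measure.pi fun i ↦ gaussianReal (μ i) (v i)).map (fun x ↦ ∑ i, x i) =
      gaussianReal (∑ i, μ i) (∑ i, v i) := by
  refine Measure.ext_of_charFun ?_
  ext t
  rw [charFun_map_sum_pi_eq_prod, Finset.prod_apply]
  simp_rw [charFun_gaussianReal, ← Complex.exp_sum]
  push_cast
  congr 1
  rw [Finset.mul_sum, Finset.sum_mul, Finset.sum_mul, Finset.sum_div, ← Finset.sum_sub_distrib]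

lemma map_pi_gaussianReal_sum_mul {ι : Type*} [Fintype ι] (μ : ι → ℝ) (v : ι → ℝ≥0) (z : ι → ℝ) :
    (Measure.pi fun i ↦ gaussianReal (μ i) (v i)).map (fun x ↦ ∑ i, x i * z i) =
      gaussianReal (∑ i, z i * μ i) (∑ i, (z i ^ 2).toNNReal * v i) := by
  have hcomp : (fun x : ι → ℝ ↦ ∑ i, x i * z i) =
      (fun y ↦ ∑ i, y i) ∘ (fun x i ↦ x i * z i) := rfl
  rw [hcomp, ← Measure.map_map (by fun_prop) (by fun_prop),
    Measure.pi_map_pi fun i ↦ (measurable_mul_const (z i)).aemeasurable]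
  simp_rw [gaussianReal_map_mul_const, ← Real.toNNReal_of_nonneg (sq_nonneg _)]
  exact map_pi_gaussianReal_sum _ _

lemma hasDerivAt_gaussianPDFReal (μ : ℝ) (v : ℝ≥0) (x : ℝ) :
    HasDerivAt (gaussianPDFReal μ v) (-((x - μ) / v) * gaussianPDFReal μ v x) x := by
  have hexponent : HasDerivAt (fun y ↦ -(y - μ) ^ 2 / (2 * v)) (-(2 * (x - μ)) / (2 * v)) x := by
    simpa using (((hasDerivAt_id' x).sub_const μ).pow 2).neg.div_const (2 * (v : ℝ))
  rw [neg_div, mul_div_mul_left _ _ two_ne_zero] at hexponent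
  rw [gaussianPDFReal_def]
  exact (hexponent.exp.const_mul _).congr_deriv (by ring)

lemma tendsto_gaussianPDFReal_atTop (μ : ℝ) {v : ℝ≥0} (hv : v ≠ 0) :
    Tendsto (gaussianPDFReal μ v) atTop (𝓝 0) := by
  have hsq : Tendsto (fun x ↦ (x - μ) ^ 2 / (2 * v)) atTop atTop :=
    ((tendsto_pow_atTop two_ne_zero).comp
      (tendsto_atTop_add_const_right _ (-μ) tendsto_id)).atTop_div_const (by positivity)
  have hexp := (tendsto_exp_atBot.comp (tendsto_neg_atTop_atBot.comp hsq)).const_mul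
    (√(2 * π * v))⁻¹
  rw [mul_zero] at hexp
  refine hexp.congr fun x ↦ ?_
  simp [gaussianPDFReal_def, neg_div, sub_eq_add_neg]

lemma integrable_mul_gaussianPDFReal (μ : ℝ) {v : ℝ≥0} (hv : v ≠ 0) :
    Integrable fun x ↦ x * gaussianPDFReal μ v x := by
  have h := (memLp_id_gaussianReal (μ := μ) (v := v) 1).integrable le_rfl
  rw [gaussianReal_of_var_ne_zero μ hv, integrable_withDensity_iff_integrable_smul'
    (measurable_gaussianPDF μ v) (ae_of_all _ fun _ ↦ gaussianPDF_lt_top)] at h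
  refine h.congr (ae_of_all _ fun x ↦ ?_)
  simp [gaussianPDF, ENNReal.toReal_ofReal (gaussianPDFReal_nonneg μ v x), mul_comm]

lemma integral_Ioi_sub_mul_gaussianPDFReal (μ : ℝ) {v : ℝ≥0} (hv : v ≠ 0) (l : ℝ) :
    ∫ x in Ioi l, (x - μ) * gaussianPDFReal μ v x = v * gaussianPDFReal μ v l := by
  have hderiv (x : ℝ) : HasDerivAt (fun y ↦ -v * gaussianPDFReal μ v y)
      ((x - μ) * gaussianPDFReal μ v x) x := by
    refine ((hasDerivAt_gaussianPDFReal μ v x).const_mul _).congr_deriv ?_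
    field_simp [NNReal.coe_ne_zero.mpr hv]
  have hint : Integrable fun x ↦ (x - μ) * gaussianPDFReal μ v x := by
    simp_rw [sub_mul]
    exact (integrable_mul_gaussianPDFReal μ hv).sub ((integrable_gaussianPDFReal μ v).const_mul μ)
  have hlim := (tendsto_gaussianPDFReal_atTop μ hv).const_mul (-v : ℝ)
  rw [mul_zero] at hlim
  rw [integral_Ioi_of_hasDerivAt_of_tendsto (hderiv l).continuousAt.continuousWithinAt
    (fun x _ ↦ hderiv x) hint.integrableOn hlim]
  ring

lemma setIntegral_Ioi_sub_gaussianReal (μ : ℝ) {v : ℝ≥0} (hv : v ≠ 0) (l : ℝ) :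
    ∫ x in Ioi l, (x - μ) ∂gaussianReal μ v = v * gaussianPDFReal μ v l := by
  rw [← integral_Ioi_sub_mul_gaussianPDFReal μ hv l, gaussianReal_of_var_ne_zero μ hv,
    restrict_withDensity measurableSet_Ioi, integral_withDensity_eq_integral_toReal_smul
      (measurable_gaussianPDF μ v) (ae_of_all _ fun _ ↦ gaussianPDF_lt_top)]
  refine integral_congr_ae (ae_of_all _ fun x ↦ ?_)
  simp [gaussianPDF, ENNReal.toReal_ofReal (gaussianPDFReal_nonneg μ v x), mul_comm]

lemma measurable_phi (l : ℝ) : Measurable (phi l) :=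
  Measurable.ite (measurableSet_le measurable_const measurable_abs)
    (measurable_abs.sub measurable_const) measurable_const

lemma phi_nonneg (l s : ℝ) : 0 ≤ phi l s := by
  unfold phi
  split_ifs <;> linarith

lemma phi_le_indicator {l : ℝ} (hl : 0 ≤ l) (s : ℝ) :
    phi l s ≤ (Ioi l).indicator id s + (Ioi l).indicator id (-s) := by
  simp only [phi, indicator, mem_Ioi, id]
  split_ifs <;> cases abs_cases s <;> linarith

lemma integral_phi_gaussianReal_le {v : ℝ≥0} (hv : v ≠ 0) {l : ℝ} (hl : 0 ≤ l) :
    ∫ s, phi l s ∂gaussianReal 0 v ≤ √(2 / π) * √v * exp (-l ^ 2 / (2 * v)) := by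
  set N := gaussianReal 0 v
  have hint : Integrable ((Ioi l).indicator id) N :=
    ((memLp_id_gaussianReal 1).integrable le_rfl).indicator measurableSet_Ioi
  have hneg : N.map (fun s ↦ -s) = N := by rw [gaussianReal_map_neg, neg_zero]
  have hint_neg : Integrable (fun s ↦ (Ioi l).indicator id (-s)) N :=
    Integrable.comp_measurable (by rwa [hneg]) measurable_neg
  have hsymm : ∫ s, (Ioi l).indicator id (-s) ∂N = ∫ s, (Ioi l).indicator id s ∂N := by
    rw [← integral_map measurable_neg.aemeasurable (by rw [hneg]; exact hint.1), hneg]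
  have htail : ∫ s, (Ioi l).indicator id s ∂N = v * gaussianPDFReal 0 v l := by
    rw [integral_indicator measurableSet_Ioi, ← setIntegral_Ioi_sub_gaussianReal 0 hv l]
    simp only [id, sub_zero]
    rfl
  have hconst : √(2 / π) * √v * √(2 * π * v) = 2 * v := by
    rw [← sqrt_mul (by positivity), ← sqrt_mul (by positivity),
      show 2 / π * v * (2 * π * v) = (2 * v) ^ 2 by field_simp]
    exact sqrt_sq (by positivity)
  calc ∫ s, phi l s ∂N
      ≤ ∫ s, ((Ioi l).indicator id s + (Ioi l).indicator id (-s)) ∂N :=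
        integral_mono_of_nonneg (ae_of_all _ (phi_nonneg l)) (hint.add hint_neg)
          (ae_of_all _ (phi_le_indicator hl))
    _ = 2 * v * gaussianPDFReal 0 v l := by
        rw [integral_add hint hint_neg, hsymm, htail]; ring
    _ = √(2 / π) * √v * exp (-l ^ 2 / (2 * v)) := by
        rw [gaussianPDFReal, ← hconst, sub_zero]
        field_simp

theorem stmt6 (n : ℕ) (z : Fin n → ℝ) (hz : z ≠ 0) (l : ℝ) (hl : 0 < l) :
    ∫ g, phi l (∑ i, g i * z i) ∂(stdGaussian n) ≤
      Real.sqrt (2 / Real.pi) * Real.sqrt (∑ i, z i ^ 2) *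
        Real.exp (-l ^ 2 / (2 * (∑ i, z i ^ 2))) := by
  set V : ℝ≥0 := ∑ i, (z i ^ 2).toNNReal
  have hV : (V : ℝ) = ∑ i, z i ^ 2 := by simp [V, sq_nonneg]
  have hV0 : V ≠ 0 := by
    rw [← NNReal.coe_ne_zero, hV, Ne, Fintype.sum_eq_zero_iff_of_nonneg fun i ↦ sq_nonneg (z i)]
    exact fun h ↦ hz (funext fun i ↦ pow_eq_zero_iff two_ne_zero |>.mp (congrFun h i))
  have hlaw : (stdGaussian n).map (fun g ↦ ∑ i, g i * z i) = gaussianReal 0 V := by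
    have h := map_pi_gaussianReal_sum_mul (fun _ : Fin n ↦ 0) (fun _ ↦ 1) z
    simp only [mul_zero, Finset.sum_const_zero, mul_one] at h
    exact h
  have hmeas : Measurable fun g : Fin n → ℝ ↦ ∑ i, g i * z i := by fun_prop
  rw [← integral_map hmeas.aemeasurable (measurable_phi l).aestronglyMeasurable, hlaw, ← hV]
  exact integral_phi_gaussianReal_le hV0 hl.le
end

section
/- Let V be uniformly distributed on S^{k−1} with k ≥ 8, and let α ∈ (0,1]. Then for any x ∈ S^{k−1}: P(‖V − x‖₂ ≤ α) ≤ α^{k−1}/√k. -/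
/-!
On the sphere, `‖v - x‖ ≤ α` iff `⟪x, v⟫ ≥ δ := 1 - α² / 2`, and the uniform measure of this cap
is the volume of the cone it spans divided by the volume of the unit ball. In the coordinates
`(⟪x, y⟫, y⊥) ∈ ℝ × ℝᵏ⁻¹` that cone lies in the solid cone of slope `ρ / δ`, `ρ = √(1 - δ²)`,
over heights `[0, δ]` together with the cap of the ball over `[δ, 1]`; integrating the volumes
`ωₖ₋₁ rᵏ⁻¹` of the slices bounds it by `ρᵏ⁻¹ ωₖ₋₁ / (k δ)`. The ball contains the cylinder of
half-height `1 / √k` and radius `√(1 - 1/k)`, of volume at least `ωₖ₋₁ / √k` since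
`(1 - 1/k)ᵏ⁻¹ ≥ 1/4`. Hence `P(⟪V, x⟫ ≥ δ) ≤ ρᵏ⁻¹ / (δ √k)`, and
`ρᵏ⁻¹ = αᵏ⁻¹ (1 - α²/4)^((k-1)/2) ≤ αᵏ⁻¹ δ` once `k ≥ 7`.
-/

open MeasureTheory Metric

/-- The uniform probability measure on the unit sphere of `ℝᵏ`. -/
noncomputable def unifSphere (k : ℕ) :
    Measure (sphere (0 : EuclideanSpace ℝ (Fin k)) 1) :=
  (((volume : Measure (EuclideanSpace ℝ (Fin k))).toSphere) Set.univ)⁻¹ •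
    (volume : Measure (EuclideanSpace ℝ (Fin k))).toSphere

open Set RealInnerProductSpace Pointwise

lemma volume_setOf_sum_sq_le (n : ℕ) {r : ℝ} (hr : 0 ≤ r) :
    volume {w : Fin n → ℝ | ∑ j, w j ^ 2 ≤ r ^ 2} =
      ENNReal.ofReal (r ^ n) * volume (closedBall (0 : EuclideanSpace ℝ (Fin n)) 1) := by
  have hmp := EuclideanSpace.volume_preserving_symm_measurableEquiv_toLp (Fin n)
  have hm : MeasurableSet {w : Fin n → ℝ | ∑ j, w j ^ 2 ≤ r ^ 2} :=
    measurableSet_le (by fun_prop) (by fun_prop)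
  have hpre : (MeasurableEquiv.toLp 2 (Fin n → ℝ)).symm ⁻¹' {w | ∑ j, w j ^ 2 ≤ r ^ 2} =
      closedBall (0 : EuclideanSpace ℝ (Fin n)) r := by
    ext v
    simp only [mem_preimage, mem_ofPred_eq, mem_closedBall, dist_zero_right,
      EuclideanSpace.norm_eq, Real.norm_eq_abs, sq_abs, Real.sqrt_le_iff, hr, true_and]
    rfl
  rw [← hmp.measure_preimage hm.nullMeasurableSet, hpre, Measure.addHaar_closedBall' _ _ hr,
    finrank_euclideanSpace_fin]

def solidOfRevolution (n : ℕ) (I : Set ℝ) (R : ℝ → ℝ) : Set (ℝ × (Fin n → ℝ)) :=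
  {p | p.1 ∈ I ∧ ∑ j, p.2 j ^ 2 ≤ R p.1 ^ 2}

lemma measurableSet_solidOfRevolution (n : ℕ) {I : Set ℝ} (hI : MeasurableSet I) {R : ℝ → ℝ}
    (hR : Measurable R) : MeasurableSet (solidOfRevolution n I R) :=
  (measurable_fst hI).inter <| measurableSet_le (f := fun p : ℝ × (Fin n → ℝ) => ∑ j, p.2 j ^ 2)
    (by fun_prop) (by fun_prop)

lemma volume_solidOfRevolution (n : ℕ) {I : Set ℝ} (hI : MeasurableSet I) {R : ℝ → ℝ}
    (hR : Measurable R) (hR0 : ∀ t ∈ I, 0 ≤ R t) :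
    volume (solidOfRevolution n I R) = (∫⁻ t in I, ENNReal.ofReal (R t ^ n)) *
      volume (closedBall (0 : EuclideanSpace ℝ (Fin n)) 1) := by
  rw [Measure.volume_eq_prod, Measure.prod_apply (measurableSet_solidOfRevolution n hI hR),
    ← lintegral_mul_const _ (by fun_prop), ← lintegral_indicator hI]
  refine lintegral_congr fun t => ?_
  by_cases ht : t ∈ I
  · simp [solidOfRevolution, ht, volume_setOf_sum_sq_le n (hR0 t ht)]
  · simp [solidOfRevolution, ht]

lemma integral_mul_sqrt_one_sub_sq_pow (n : ℕ) {δ : ℝ} (h0 : -1 ≤ δ) (h1 : δ ≤ 1) :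
    ∫ t in δ..1, t * √(1 - t ^ 2) ^ n = √(1 - δ ^ 2) ^ (n + 2) / (n + 2) := by
  have sqrt_pow {a : ℝ} (ha : 0 ≤ a) (m : ℕ) : √a ^ m = a ^ ((m : ℝ) / 2) := by
    rw [Real.sqrt_eq_rpow, ← Real.rpow_natCast, ← Real.rpow_mul ha]
    ring_nf
  have hderiv (t : ℝ) : HasDerivAt (fun y : ℝ => -(1 - y ^ 2) ^ (((n : ℝ) + 2) / 2) / (n + 2))
      (t * (1 - t ^ 2) ^ ((n : ℝ) / 2)) t := by
    have hb : HasDerivAt (fun y : ℝ => 1 - y ^ 2) (-(2 * t)) t := by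
      simpa using (hasDerivAt_pow 2 t).const_sub 1
    have hp : (1 : ℝ) ≤ ((n : ℝ) + 2) / 2 := by linarith [n.cast_nonneg (α := ℝ)]
    refine ((hb.rpow_const (Or.inr hp)).neg.div_const ((n : ℝ) + 2)).congr_deriv ?_
    rw [show ((n : ℝ) + 2) / 2 - 1 = n / 2 by ring]
    field_simp
  have hcongr : EqOn (fun t : ℝ => t * √(1 - t ^ 2) ^ n)
      (fun t : ℝ => t * (1 - t ^ 2) ^ ((n : ℝ) / 2)) (uIcc δ 1) := by
    intro t ht
    rw [uIcc_of_le h1] at ht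
    simp only [sqrt_pow (show 0 ≤ 1 - t ^ 2 by nlinarith [ht.1, ht.2])]
  rw [intervalIntegral.integral_congr hcongr,
    intervalIntegral.integral_eq_sub_of_hasDerivAt (fun t _ => hderiv t)
      (Continuous.intervalIntegrable (continuous_id.mul ((continuous_const.sub
        (continuous_pow 2)).rpow_const fun _ => Or.inr (by positivity))) _ _),
    sqrt_pow (show 0 ≤ 1 - δ ^ 2 by nlinarith)]
  norm_num [Real.zero_rpow (show ((n : ℝ) + 2) / 2 ≠ 0 by positivity)]
  ring

lemma setLIntegral_sqrt_one_sub_sq_pow_le (n : ℕ) {δ : ℝ} (h0 : 0 < δ) (h1 : δ ≤ 1) :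
    ∫⁻ t in Icc δ 1, ENNReal.ofReal (√(1 - t ^ 2) ^ n) ≤
      ENNReal.ofReal (√(1 - δ ^ 2) ^ (n + 2) / ((n + 2) * δ)) := by
  -- `1 ≤ t / δ` on `[δ, 1]`, and `t` times the integrand has an explicit primitive
  calc ∫⁻ t in Icc δ 1, ENNReal.ofReal (√(1 - t ^ 2) ^ n)
      ≤ ∫⁻ t in Icc δ 1, ENNReal.ofReal (t * √(1 - t ^ 2) ^ n / δ) := by
        refine setLIntegral_mono' measurableSet_Icc fun t ht => ENNReal.ofReal_le_ofReal ?_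
        rw [le_div_iff₀ h0]
        nlinarith [ht.1, (by positivity : 0 ≤ √(1 - t ^ 2) ^ n)]
    _ = ENNReal.ofReal (∫ t in δ..1, t * √(1 - t ^ 2) ^ n / δ) := by
        rw [intervalIntegral.integral_of_le h1, ← integral_Icc_eq_integral_Ioc,
          ofReal_integral_eq_lintegral_ofReal (Continuous.integrableOn_Icc (by fun_prop))]
        filter_upwards [ae_restrict_mem measurableSet_Icc] with t ht
        have : 0 < t := h0.trans_le ht.1
        positivity
    _ = ENNReal.ofReal (√(1 - δ ^ 2) ^ (n + 2) / ((n + 2) * δ)) := by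
        rw [intervalIntegral.integral_div, integral_mul_sqrt_one_sub_sq_pow n (by linarith) h1,
          div_div]

section InnerProductSpace

variable {E : Type*} [NormedAddCommGroup E] [InnerProductSpace ℝ E]

lemma norm_sub_le_iff_le_inner {x v : E} (hx : ‖x‖ = 1) (hv : ‖v‖ = 1) {α : ℝ} (hα : 0 ≤ α) :
    ‖v - x‖ ≤ α ↔ 1 - α ^ 2 / 2 ≤ ⟪x, v⟫ := by
  rw [← sq_le_sq₀ (norm_nonneg _) hα, norm_sub_sq_real, hx, hv, real_inner_comm]
  constructor <;> intro h <;> linarith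

def sphericalSector (x : E) (δ : ℝ) : Set E :=
  {y | ‖y‖ ≤ 1 ∧ δ * ‖y‖ ≤ ⟪x, y⟫}

lemma Ioo_smul_subset_sphericalSector {x : E} {δ : ℝ} {S : Set E}
    (hS : S ⊆ sphericalSector x δ) :
    Ioo (0 : ℝ) 1 • S ⊆ sphericalSector x δ := by
  rintro _ ⟨r, ⟨hr0, hr1⟩, y, hy, rfl⟩
  obtain ⟨hy1, hyδ⟩ := hS hy
  simp only [sphericalSector, mem_ofPred_eq, norm_smul, Real.norm_of_nonneg hr0.le,
    inner_smul_right]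
  exact ⟨by nlinarith, by nlinarith⟩

lemma sphericalSector_subset_preimage_solidOfRevolution {n : ℕ} {x : E} {δ : ℝ} (hδ0 : 0 < δ)
    (hδ1 : δ ≤ 1) {Φ : E → ℝ × (Fin n → ℝ)}
    (hΦ : ∀ y, (Φ y).1 = ⟪x, y⟫ ∧ ∑ j, (Φ y).2 j ^ 2 = ‖y‖ ^ 2 - ⟪x, y⟫ ^ 2) :
    sphericalSector x δ ⊆ Φ ⁻¹' (solidOfRevolution n (Icc 0 δ) (fun t => √(1 - δ ^ 2) / δ * t) ∪
      solidOfRevolution n (Icc δ 1) (fun t => √(1 - t ^ 2))) := by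
  rintro y ⟨hy1, hyδ⟩
  obtain ⟨hfst, hsnd⟩ := hΦ y
  have hρ : √(1 - δ ^ 2) ^ 2 = 1 - δ ^ 2 := Real.sq_sqrt (by nlinarith)
  have hy0 : 0 ≤ ‖y‖ := norm_nonneg y
  have hw0 : 0 ≤ ∑ j, (Φ y).2 j ^ 2 := by positivity
  simp only [solidOfRevolution, mem_preimage, mem_union, mem_ofPred_eq, mem_Icc, hfst, hsnd]
  rcases le_or_gt δ ⟪x, y⟫ with hδt | htδ
  · right
    have ht1 : ⟪x, y⟫ ≤ 1 := by nlinarith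
    rw [Real.sq_sqrt (by nlinarith)]
    exact ⟨⟨hδt, ht1⟩, by nlinarith⟩
  · left
    refine ⟨⟨by nlinarith, htδ.le⟩, ?_⟩
    rw [mul_pow, div_pow, hρ, div_mul_eq_mul_div, le_div_iff₀ (by positivity)]
    nlinarith [mul_le_mul hyδ hyδ (by positivity) (by nlinarith)]

end InnerProductSpace

lemma exists_measurePreserving_inner_coords {n : ℕ} {x : EuclideanSpace ℝ (Fin (n + 1))}
    (hx : ‖x‖ = 1) :
    ∃ Φ : EuclideanSpace ℝ (Fin (n + 1)) → ℝ × (Fin n → ℝ), MeasurePreserving Φ ∧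
      ∀ y, (Φ y).1 = ⟪x, y⟫ ∧ ∑ j, (Φ y).2 j ^ 2 = ‖y‖ ^ 2 - ⟪x, y⟫ ^ 2 := by
  set e₀ : EuclideanSpace ℝ (Fin (n + 1)) := EuclideanSpace.single 0 1
  -- the reflection exchanging `x` and `e₀` turns `⟪x, ·⟫` into the first coordinate
  set f := Submodule.reflection (ℝ ∙ (x - e₀))ᗮ
  have hfx : f x = e₀ := Submodule.reflection_sub (by simp [e₀, hx])
  have hinner (y : EuclideanSpace ℝ (Fin (n + 1))) : ⟪x, y⟫ = f y 0 := by
    rw [← f.inner_map_map x y, hfx, EuclideanSpace.inner_single_left]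
    simp
  refine ⟨_, ((volume_preserving_piFinSuccAbove (fun _ : Fin (n + 1) => ℝ) 0).comp
    (EuclideanSpace.volume_preserving_symm_measurableEquiv_toLp (Fin (n + 1)))).comp
    f.measurePreserving, fun y => ⟨(hinner y).symm, ?_⟩⟩
  rw [← f.norm_map y, EuclideanSpace.norm_eq, Real.sq_sqrt (by positivity), hinner,
    Fin.sum_univ_succAbove _ 0]
  simp [Fin.tail]

lemma volume_sphericalSector_le {n : ℕ} {x : EuclideanSpace ℝ (Fin (n + 1))} (hx : ‖x‖ = 1)
    {δ : ℝ} (hδ0 : 0 < δ) (hδ1 : δ ≤ 1) :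
    volume (sphericalSector x δ) ≤ ENNReal.ofReal (√(1 - δ ^ 2) ^ n / ((n + 1) * δ)) *
      volume (closedBall (0 : EuclideanSpace ℝ (Fin n)) 1) := by
  obtain ⟨Φ, hΦ, hΦ_coords⟩ := exists_measurePreserving_inner_coords hx
  set ρ := √(1 - δ ^ 2)
  set ω := volume (closedBall (0 : EuclideanSpace ℝ (Fin n)) 1)
  have hρ : ρ ^ 2 = 1 - δ ^ 2 := Real.sq_sqrt (by nlinarith)
  have hcone : volume (solidOfRevolution n (Icc 0 δ) (fun t => ρ / δ * t)) =
      ENNReal.ofReal (ρ ^ n * δ / (n + 1)) * ω := by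
    rw [volume_solidOfRevolution n measurableSet_Icc (by fun_prop)
      fun t ht => by have := ht.1; positivity,
      ← ofReal_integral_eq_lintegral_ofReal (Continuous.integrableOn_Icc (by fun_prop))]
    · rw [integral_Icc_eq_integral_Ioc, ← intervalIntegral.integral_of_le hδ0.le]
      simp only [mul_pow, intervalIntegral.integral_const_mul, integral_pow, div_pow]
      congr 2
      field_simp
      ring
    · filter_upwards [ae_restrict_mem measurableSet_Icc] with t ht
      have := ht.1
      positivity
  have hcap : volume (solidOfRevolution n (Icc δ 1) (fun t => √(1 - t ^ 2))) ≤
      ENNReal.ofReal (ρ ^ (n + 2) / ((n + 2) * δ)) * ω := by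
    rw [volume_solidOfRevolution n measurableSet_Icc (by fun_prop) fun _ _ => Real.sqrt_nonneg _]
    gcongr
    exact setLIntegral_sqrt_one_sub_sq_pow_le n hδ0 hδ1
  have hsum : ρ ^ n * δ / (n + 1) + ρ ^ (n + 2) / ((n + 2) * δ) ≤ ρ ^ n / ((n + 1) * δ) := by
    rw [pow_add, hρ, div_add_div _ _ (by positivity) (by positivity),
      div_le_div_iff₀ (by positivity) (by positivity)]
    have hρn : 0 ≤ ρ ^ n := by positivity
    have hδ2 : δ ^ 2 ≤ 1 := by nlinarith
    nlinarith [mul_nonneg (mul_nonneg hρn (sub_nonneg.2 hδ2))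
      (by positivity : (0 : ℝ) ≤ (n + 1) * δ)]
  calc volume (sphericalSector x δ)
      ≤ volume (solidOfRevolution n (Icc 0 δ) (fun t => ρ / δ * t) ∪
          solidOfRevolution n (Icc δ 1) (fun t => √(1 - t ^ 2))) :=
        (measure_mono (sphericalSector_subset_preimage_solidOfRevolution hδ0 hδ1
          hΦ_coords)).trans (hΦ.measure_preimage_le _)
    _ ≤ ENNReal.ofReal (ρ ^ n * δ / (n + 1)) * ω +
          ENNReal.ofReal (ρ ^ (n + 2) / ((n + 2) * δ)) * ω :=
        (measure_union_le _ _).trans (add_le_add hcone.le hcap)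
    _ ≤ ENNReal.ofReal (ρ ^ n / ((n + 1) * δ)) * ω := by
        rw [← add_mul, ← ENNReal.ofReal_add (by positivity) (by positivity)]
        gcongr

lemma inv_four_le_div_add_one_pow (n : ℕ) : (4 : ℝ)⁻¹ ≤ ((n : ℝ) / (n + 1)) ^ n := by
  rcases Nat.eq_zero_or_pos n with rfl | hn
  · norm_num
  have hinv : ((n : ℝ) / (n + 1)) ^ n = ((1 + (n : ℝ)⁻¹) ^ n)⁻¹ := by
    rw [← inv_pow]
    congr 1
    field_simp
  rw [hinv]
  exact inv_anti₀ (by positivity)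
    (Real.one_add_inv_pow_le_exp.trans (by linarith [Real.exp_one_lt_d9]))

lemma ofReal_inv_sqrt_mul_volume_closedBall_le_volume_ball (n : ℕ) :
    ENNReal.ofReal (√(n + 1))⁻¹ * volume (closedBall (0 : EuclideanSpace ℝ (Fin n)) 1) ≤
      volume (ball (0 : EuclideanSpace ℝ (Fin (n + 1))) 1) := by
  obtain ⟨Φ, hΦ, hΦ_coords⟩ :=
    exists_measurePreserving_inner_coords (x := EuclideanSpace.single 0 1) (by simp)
  set s := (√(n + 1))⁻¹
  set r := √(1 - s ^ 2)
  have hs2 : s ^ 2 = ((n : ℝ) + 1)⁻¹ := by rw [inv_pow, Real.sq_sqrt (by positivity)]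
  have hs1 : s ^ 2 ≤ 1 := by rw [hs2]; exact inv_le_one_of_one_le₀ (by simp)
  have hr2 : r ^ 2 = 1 - s ^ 2 := Real.sq_sqrt (by linarith)
  have hrn : 2⁻¹ ≤ r ^ n := by
    have h4 : (4 : ℝ)⁻¹ ≤ (r ^ n) ^ 2 := by
      rw [← pow_mul, mul_comm, pow_mul, hr2, hs2,
        show 1 - ((n : ℝ) + 1)⁻¹ = n / (n + 1) by field_simp; ring]
      exact inv_four_le_div_add_one_pow n
    nlinarith [pow_nonneg (Real.sqrt_nonneg (1 - s ^ 2)) n]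
  have hcyl : Φ ⁻¹' solidOfRevolution n (Icc (-s) s) (fun _ => r) ⊆ closedBall 0 1 := by
    rintro y ⟨hy, hw⟩
    obtain ⟨hfst, hsnd⟩ := hΦ_coords y
    rw [hfst] at hy
    rw [hsnd, hfst, hr2] at hw
    have := sq_le_sq' hy.1 hy.2
    rw [mem_closedBall_zero_iff, ← abs_norm, ← sq_le_one_iff_abs_le_one]
    linarith
  rw [← Measure.addHaar_closedBall_eq_addHaar_ball]
  calc ENNReal.ofReal s * volume (closedBall (0 : EuclideanSpace ℝ (Fin n)) 1)
      ≤ ENNReal.ofReal (2 * s * r ^ n) *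
          volume (closedBall (0 : EuclideanSpace ℝ (Fin n)) 1) := by
        gcongr
        nlinarith [(by positivity : 0 ≤ s)]
    _ = volume (solidOfRevolution n (Icc (-s) s) (fun _ => r)) := by
        rw [volume_solidOfRevolution n measurableSet_Icc measurable_const
          fun _ _ => Real.sqrt_nonneg _, setLIntegral_const, Real.volume_Icc,
          ← ENNReal.ofReal_mul (by positivity)]
        congr 2
        ring
    _ = volume (Φ ⁻¹' solidOfRevolution n (Icc (-s) s) (fun _ => r)) :=
        (hΦ.measure_preimage (measurableSet_solidOfRevolution n measurableSet_Icc
          measurable_const).nullMeasurableSet).symm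
    _ ≤ _ := measure_mono hcyl

lemma unifSphere_apply {k : ℕ} (hk : k ≠ 0) {s : Set (sphere (0 : EuclideanSpace ℝ (Fin k)) 1)}
    (hs : MeasurableSet s) :
    unifSphere k s = volume (Ioo (0 : ℝ) 1 • (Subtype.val '' s)) /
      volume (ball (0 : EuclideanSpace ℝ (Fin k)) 1) := by
  rw [unifSphere, Measure.smul_apply, smul_eq_mul, Measure.toSphere_apply' _ hs,
    Measure.toSphere_apply_univ, finrank_euclideanSpace_fin, ← ENNReal.div_eq_inv_mul,
    ENNReal.mul_div_mul_left _ _ (by simpa) (ENNReal.natCast_ne_top k)]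

lemma unifSphere_setOf_le_inner_le {n : ℕ} {x : EuclideanSpace ℝ (Fin (n + 1))} (hx : ‖x‖ = 1)
    {δ : ℝ} (hδ0 : 0 < δ) (hδ1 : δ ≤ 1) :
    unifSphere (n + 1) {v | δ ≤ ⟪x, (v : EuclideanSpace ℝ (Fin (n + 1)))⟫} ≤
      ENNReal.ofReal (√(1 - δ ^ 2) ^ n / (δ * √(n + 1))) := by
  set cap : Set (sphere (0 : EuclideanSpace ℝ (Fin (n + 1))) 1) :=
    {v | δ ≤ ⟪x, (v : EuclideanSpace ℝ (Fin (n + 1)))⟫}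
  have hm : MeasurableSet cap := (isClosed_le continuous_const (by fun_prop)).measurableSet
  have hcone : Ioo (0 : ℝ) 1 • (Subtype.val '' cap) ⊆ sphericalSector x δ := by
    refine Ioo_smul_subset_sphericalSector ?_
    rintro _ ⟨v, hv, rfl⟩
    simpa [sphericalSector, norm_eq_of_mem_sphere v, cap] using hv
  have hsqrt : √((n : ℝ) + 1) * √(n + 1) = n + 1 := Real.mul_self_sqrt (by positivity)
  rw [unifSphere_apply n.succ_ne_zero hm]
  refine ENNReal.div_le_of_le_mul ?_
  calc _ ≤ volume (sphericalSector x δ) := measure_mono hcone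
    _ ≤ ENNReal.ofReal (√(1 - δ ^ 2) ^ n / ((n + 1) * δ)) *
          volume (closedBall (0 : EuclideanSpace ℝ (Fin n)) 1) :=
        volume_sphericalSector_le hx hδ0 hδ1
    _ = ENNReal.ofReal (√(1 - δ ^ 2) ^ n / (δ * √(n + 1))) *
          (ENNReal.ofReal (√(n + 1))⁻¹ *
            volume (closedBall (0 : EuclideanSpace ℝ (Fin n)) 1)) := by
        rw [← mul_assoc, ← ENNReal.ofReal_mul (by positivity), ← div_eq_mul_inv, div_div,
          mul_assoc, hsqrt, mul_comm δ]
    _ ≤ ENNReal.ofReal (√(1 - δ ^ 2) ^ n / (δ * √(n + 1))) *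
          volume (ball (0 : EuclideanSpace ℝ (Fin (n + 1))) 1) := by
        gcongr
        exact ofReal_inv_sqrt_mul_volume_closedBall_le_volume_ball n

lemma sqrt_one_sub_sq_pow_le {α : ℝ} (hα0 : 0 ≤ α) (hα1 : α ≤ 1) {n : ℕ} (hn : 6 ≤ n) :
    √(1 - (1 - α ^ 2 / 2) ^ 2) ^ n ≤ α ^ n * (1 - α ^ 2 / 2) := by
  have hg : 0 ≤ 1 - α ^ 2 / 4 := by nlinarith
  have hsplit : √(1 - (1 - α ^ 2 / 2) ^ 2) = α * √(1 - α ^ 2 / 4) := by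
    rw [show 1 - (1 - α ^ 2 / 2) ^ 2 = α ^ 2 * (1 - α ^ 2 / 4) by ring,
      Real.sqrt_mul (sq_nonneg α), Real.sqrt_sq hα0]
  rw [hsplit, mul_pow]
  gcongr
  calc √(1 - α ^ 2 / 4) ^ n ≤ √(1 - α ^ 2 / 4) ^ (2 * 3) :=
        pow_le_pow_of_le_one (Real.sqrt_nonneg _) (Real.sqrt_le_one.mpr (by nlinarith)) hn
    _ = (1 - α ^ 2 / 4) ^ 3 := by rw [pow_mul, Real.sq_sqrt hg]
    _ ≤ 1 - α ^ 2 / 2 := by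
        have h : 0 ≤ 16 - 12 * α ^ 2 + (α ^ 2) ^ 2 := by nlinarith
        nlinarith [mul_nonneg (sq_nonneg α) h]

theorem stmt13 (k : ℕ) (hk : 8 ≤ k) (α : ℝ) (hα : 0 < α) (hα' : α ≤ 1)
    (x : EuclideanSpace ℝ (Fin k)) (hx : ‖x‖ = 1) :
    unifSphere k {v | ‖(v : EuclideanSpace ℝ (Fin k)) - x‖ ≤ α} ≤
      ENNReal.ofReal (α ^ (k - 1) / Real.sqrt k) := by
  obtain ⟨n, rfl⟩ : ∃ n, k = n + 1 := ⟨k - 1, by omega⟩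
  have hα2 : α ^ 2 ≤ 1 := by nlinarith
  have hcap (v : sphere (0 : EuclideanSpace ℝ (Fin (n + 1))) 1) :
      ‖(v : EuclideanSpace ℝ (Fin (n + 1))) - x‖ ≤ α ↔ 1 - α ^ 2 / 2 ≤ ⟪x, ↑v⟫ :=
    norm_sub_le_iff_le_inner hx (norm_eq_of_mem_sphere v) hα.le
  simp_rw [hcap]
  rw [Nat.add_sub_cancel, Nat.cast_add_one]
  refine (unifSphere_setOf_le_inner_le hx (by linarith) (by nlinarith)).trans
    (ENNReal.ofReal_le_ofReal ?_)
  rw [← div_div]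
  gcongr
  rw [div_le_iff₀ (by linarith)]
  exact sqrt_one_sub_sq_pow_le hα.le hα' (by omega)
end
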